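/- There is no mixed-integer programming formulation of the Graphical TSP on the graph G* whose only integer variables are the edge variables. Precisely: there exist no natural numbers m and q, matrix A ∈ ℝ^{m×6}, matrix B ∈ ℝ^{m×q}, and vector d ∈ ℝ^m such that the GTSP feasible set F equals the set { x ∈ ℤ^6 : ∃ y ∈ ℝ^q, A·x + B·y ≤ d } (where x is identified with its image in ℝ^6). -/
import Mathlib


/-- Endpoints of the six edges of `G*`, in the order (sa, at, sb, bt, sc, ct),
where the vertices s, t, a, b, c are encoded as 0, 1, 2, 3, 4 in `Fin 5`. -/
def edgeEnds : Fin 6 → Fin 5 × Fin 5 :=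
  ![(0, 2), (2, 1), (0, 3), (3, 1), (0, 4), (4, 1)]

/-- The cut `δ(S)`: edges of `G*` with exactly one endpoint in `S`. -/
def cut (S : Finset (Fin 5)) : Finset (Fin 6) :=
  Finset.univ.filter fun e => decide ((edgeEnds e).1 ∈ S) ≠ decide ((edgeEnds e).2 ∈ S)

/-- The GTSP feasible set `F` of `G*`: nonnegative integer edge vectors satisfying
all cut constraints and all parity constraints. -/
def gtspF : Set (Fin 6 → ℤ) :=
  { x | (∀ e, 0 ≤ x e) ∧
        (∀ S : Finset (Fin 5), S.Nonempty → S ≠ Finset.univ →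
          2 ≤ ∑ e ∈ cut S, x e) ∧
        (∀ v : Fin 5, Even (∑ e ∈ cut {v}, x e)) }

/-- The GTSP on `G*` has no mixed-integer programming formulation whose only
integer variables are the edge variables: there are no matrices `A`, `B` and
vector `d` such that `F` is the projection onto the integer `x`-variables of
the mixed-integer points of `{(x, y) : A x + B y ≤ d}`. -/
theorem gtsp_no_mip_formulation :
    ¬ ∃ (m q : ℕ) (A : Matrix (Fin m) (Fin 6) ℝ) (B : Matrix (Fin m) (Fin q) ℝ)
        (d : Fin m → ℝ),
      gtspF = { x : Fin 6 → ℤ | ∃ y : Fin q → ℝ,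
        ∀ i : Fin m, A.mulVec (fun e => (x e : ℝ)) i + B.mulVec y i ≤ d i } := by
  rintro ⟨m, q, A, B, d, hEq⟩
  have h1 : (![1,1,1,1,2,2] : Fin 6 → ℤ) ∈ gtspF := by
    simp only [gtspF, Set.mem_setOf_eq]; decide
  have h2 : (![1,1,3,3,2,2] : Fin 6 → ℤ) ∈ gtspF := by
    simp only [gtspF, Set.mem_setOf_eq]; decide
  rw [hEq] at h1 h2
  obtain ⟨y1, hy1⟩ := h1
  obtain ⟨y2, hy2⟩ := h2
  have h3 : (![1,1,2,2,2,2] : Fin 6 → ℤ) ∈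
      { x : Fin 6 → ℤ | ∃ y : Fin q → ℝ,
        ∀ i : Fin m, A.mulVec (fun e => (x e : ℝ)) i + B.mulVec y i ≤ d i } := by
    refine ⟨(1/2 : ℝ) • (y1 + y2), fun i => ?_⟩
    have hx : (fun e => ((![1,1,2,2,2,2] : Fin 6 → ℤ) e : ℝ))
        = (1/2 : ℝ) • ((fun e => ((![1,1,1,1,2,2] : Fin 6 → ℤ) e : ℝ))
          + (fun e => ((![1,1,3,3,2,2] : Fin 6 → ℤ) e : ℝ))) := by
      funext e
      fin_cases e <;> norm_num [Matrix.cons_val_succ, Matrix.cons_val_zero]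
    rw [hx, Matrix.mulVec_smul, Matrix.mulVec_smul, Matrix.mulVec_add, Matrix.mulVec_add]
    have g1 := hy1 i
    have g2 := hy2 i
    simp only [Pi.smul_apply, Pi.add_apply, smul_eq_mul]
    linarith
  rw [← hEq] at h3
  have := h3.2.2 0
  revert this
  decide
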